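/- Let S be a semigroup with distinguished subsemigroup D and domination relation ≺. For g in a groupoid G with bumpy semigroup S of Y-valued functions on open bisections, the set S_g = {a ∈ S : g ∈ int([Y^×]a)} is a filter with respect to ≺: it is an up-set and down-directed. -/
import Mathlib


/-- A groupoid modelled as a set with a partially defined (Option-valued)
multiplication and an involution. -/
structure Gpd (G : Type*) where
  mul : G → G → Option G
  inv : G → G
  inv_inv : ∀ g, inv (inv g) = g
  inv_mul_isSome : ∀ g, (mul (inv g) g).isSome
  defined_iff : ∀ g h, (mul g h).isSome ↔ mul (inv g) g = mul h (inv h)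
  massoc : ∀ {g h k gh hk}, mul g h = some gh → mul h k = some hk →
      mul gh k = mul g hk
  inv_mul_cancel : ∀ {g h gh}, mul g h = some gh → mul (inv g) gh = some h
  mul_inv_cancel : ∀ {g h gh}, mul g h = some gh → mul gh (inv h) = some g
  mul_src : ∀ {g u}, mul (inv g) g = some u → mul g u = some g
  rng_mul : ∀ {g u}, mul g (inv g) = some u → mul u g = some g

namespace Gpd

variable {G Y : Type*} (𝒢 : Gpd G)

/-- The source `s(g) = g⁻¹g`. -/
def src (g : G) : G := (𝒢.mul (𝒢.inv g) g).getD g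

/-- The range `r(g) = gg⁻¹`. -/
def rng (g : G) : G := (𝒢.mul g (𝒢.inv g)).getD g

/-- The unit space `G⁰`. -/
def unitSpace : Set G := Set.range 𝒢.src

/-- The isotropy `G^iso`. -/
def iso : Set G := {g | 𝒢.src g = 𝒢.rng g}

/-- Bisections. -/
def IsBisection (B : Set G) : Prop :=
  ∀ g ∈ B, ∀ h ∈ B, (𝒢.src g = 𝒢.src h ∨ 𝒢.rng g = 𝒢.rng h) → g = h

/-- Isosections. -/
def IsIsosection (I : Set G) : Prop :=
  ∀ g ∈ I, ∀ h ∈ I, (𝒢.src g = 𝒢.src h ↔ 𝒢.rng g = 𝒢.rng h)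

/-- Product of subsets. -/
def setMul (A B : Set G) : Set G := {x | ∃ g ∈ A, ∃ h ∈ B, 𝒢.mul g h = some x}

/-- Inverse of a subset. -/
def setInv (A : Set G) : Set G := 𝒢.inv '' A

end Gpd

/-- The domain of a `Y`-valued partial function on `G`. -/
def pdom {G Y : Type*} (a : G → Option Y) : Set G := {g | (a g).isSome}

lemma mem_pdom {G Y : Type*} {a : G → Option Y} {g : G} {y : Y}
    (h : a g = some y) : g ∈ pdom a := by
  show (a g).isSome
  rw [h]; rfl

open Classical in
/-- The product of partial functions, `ab(gh) = a(g)b(h)` on factorizations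
(well-defined when a domain is a bisection; defined by choice in general). -/
noncomputable def Gpd.convProd {G Y : Type*} [Mul Y] (𝒢 : Gpd G)
    (a b : G → Option Y) : G → Option Y := fun x =>
  if h : ∃ p : Y × Y, ∃ g k : G, a g = some p.1 ∧ b k = some p.2 ∧ 𝒢.mul g k = some x
  then some (h.choose.1 * h.choose.2) else none

/-- The set `[Y^×]a` where the function takes invertible values. -/
def unitsPre {G Y : Type*} [Monoid Y] (a : G → Option Y) : Set G :=
  {g | ∃ y, a g = some y ∧ IsUnit y}

/-- The set `[1]a` where the function takes the value `1`. -/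
def onePre {G Y : Type*} [Monoid Y] (a : G → Option Y) : Set G :=
  {g | a g = some (1 : Y)}

/-- A unital semigroup is `1`-cancellative if `xy = x ↔ y = 1 ↔ yx = x`. -/
def OneCancellative (Y : Type*) [Monoid Y] : Prop :=
  ∀ x y : Y, (x * y = x ↔ y = 1) ∧ (y * x = x ↔ y = 1)

/-- The domination relation `a ≺_s b` relative to a diagonal `D`. -/
def precS {α : Type*} (m : α → α → α) (D : Set α) (a s b : α) : Prop :=
  m (m a s) b = a ∧ m (m b s) a = a ∧ m a s ∈ D ∧ m s a ∈ D

/-- Étale: inversion and multiplication continuous, source a local homeomorphism. -/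
def Gpd.Etale {G : Type*} [TopologicalSpace G] (𝒢 : Gpd G) : Prop :=
  Continuous 𝒢.inv ∧
  Continuous (fun p : {p : G × G // (𝒢.mul p.1 p.2).isSome} =>
    (𝒢.mul p.val.1 p.val.2).get p.property) ∧
  IsLocalHomeomorph 𝒢.src

/-- Ample: étale with a basis of compact open bisections. -/
def Gpd.Ample {G : Type*} [TopologicalSpace G] (𝒢 : Gpd G) : Prop :=
  𝒢.Etale ∧ TopologicalSpace.IsTopologicalBasis
    {O : Set G | IsCompact O ∧ IsOpen O ∧ 𝒢.IsBisection O}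

/-- Bumpy semigroups of `Y`-valued functions on open bisections. -/
structure Gpd.IsBumpy {G Y : Type*} [TopologicalSpace G] [Monoid Y] (𝒢 : Gpd G)
    (S : Set (G → Option Y)) : Prop where
  domBisection : ∀ a ∈ S, 𝒢.IsBisection (pdom a)
  domOpen : ∀ a ∈ S, IsOpen (pdom a)
  mulClosed : ∀ a ∈ S, ∀ b ∈ S, 𝒢.convProd a b ∈ S
  oneProper : ∀ a ∈ S, IsCompact (onePre a)
  empty_mem : (fun _ => (none : Option Y)) ∈ S
  urysohn : ∀ O : Set G, IsOpen O → ∀ g ∈ O, ∃ a ∈ S,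
    pdom a ⊆ O ∧ g ∈ interior (unitsPre a)
  involutive : ∀ a ∈ S, ∀ g ∈ interior (unitsPre a), ∃ b ∈ S,
    𝒢.inv g ∈ interior {h | ∃ y z, a (𝒢.inv h) = some y ∧ b h = some z ∧
      y * z = 1 ∧ z * y = 1}

/-- Compact-bumpy semigroups. -/
structure Gpd.IsCompactBumpy {G Y : Type*} [TopologicalSpace G] [Monoid Y] (𝒢 : Gpd G)
    (S : Set (G → Option Y)) : Prop where
  bumpy : 𝒢.IsBumpy S
  compactUrysohn : ∀ C O : Set G, IsCompact C → 𝒢.IsBisection C → IsOpen O →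
    𝒢.IsBisection O → C ⊆ O → ∃ a ∈ S, pdom a ⊆ O ∧ C ⊆ unitsPre a
  compactInvolutive : ∀ a ∈ S, ∀ C ⊆ unitsPre a, IsCompact C → ∃ b ∈ S,
    ∀ g ∈ C, ∃ y z, a g = some y ∧ b (𝒢.inv g) = some z ∧ y * z = 1 ∧ z * y = 1



/-! ### Auxiliary lemmas -/

namespace Gpd

variable {G Y : Type*} (𝒢 : Gpd G)

private lemma getD_eq {α : Type*} {o : Option α} {x : α} (d : α) (h : o = some x) :
    o.getD d = x := by subst h; rfl

lemma src_spec (g : G) : 𝒢.mul (𝒢.inv g) g = some (𝒢.src g) := by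
  obtain ⟨u, hu⟩ := Option.isSome_iff_exists.mp (𝒢.inv_mul_isSome g)
  rw [hu, Gpd.src, hu]; rfl

lemma rng_spec (g : G) : 𝒢.mul g (𝒢.inv g) = some (𝒢.rng g) := by
  have h := 𝒢.inv_mul_isSome (𝒢.inv g)
  rw [𝒢.inv_inv] at h
  obtain ⟨u, hu⟩ := Option.isSome_iff_exists.mp h
  rw [hu, Gpd.rng, hu]; rfl

lemma src_inv (g : G) : 𝒢.src (𝒢.inv g) = 𝒢.rng g := by
  rw [Gpd.src, 𝒢.inv_inv, 𝒢.rng_spec]; rfl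

lemma rng_inv (g : G) : 𝒢.rng (𝒢.inv g) = 𝒢.src g := by
  rw [Gpd.rng, 𝒢.inv_inv, 𝒢.src_spec]; rfl

lemma comp_src_eq_rng {g k : G} (h : (𝒢.mul g k).isSome) : 𝒢.src g = 𝒢.rng k := by
  have h2 := (𝒢.defined_iff g k).mp h
  rw [𝒢.src_spec, 𝒢.rng_spec] at h2
  exact Option.some_inj.mp h2

lemma comp_of_src_eq_rng {g k : G} (h : 𝒢.src g = 𝒢.rng k) : (𝒢.mul g k).isSome :=
  (𝒢.defined_iff g k).mpr (by rw [𝒢.src_spec, 𝒢.rng_spec, h])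

lemma src_of_mul {g k x : G} (h : 𝒢.mul g k = some x) : 𝒢.src x = 𝒢.src k := by
  have h2 := 𝒢.mul_inv_cancel h
  have h3 := (𝒢.defined_iff x (𝒢.inv k)).mp (by rw [h2]; rfl)
  rw [𝒢.inv_inv, 𝒢.src_spec, 𝒢.src_spec] at h3
  exact Option.some_inj.mp h3

lemma rng_of_mul {g k x : G} (h : 𝒢.mul g k = some x) : 𝒢.rng x = 𝒢.rng g := by
  have h2 := 𝒢.inv_mul_cancel h
  have h3 := (𝒢.defined_iff (𝒢.inv g) x).mp (by rw [h2]; rfl)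
  rw [𝒢.inv_inv, 𝒢.rng_spec, 𝒢.rng_spec] at h3
  exact (Option.some_inj.mp h3).symm

lemma unit_idem (t : G) : 𝒢.mul (𝒢.src t) (𝒢.src t) = some (𝒢.src t) := by
  have h1 := 𝒢.src_spec t
  have h2 := 𝒢.mul_src h1
  have h3 := 𝒢.massoc h1 h2
  rw [h3, h1]

lemma mul_left_cancel' {g k k' x : G} (h1 : 𝒢.mul g k = some x) (h2 : 𝒢.mul g k' = some x) :
    k = k' := by
  have e1 := 𝒢.inv_mul_cancel h1
  have e2 := 𝒢.inv_mul_cancel h2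
  rw [e1] at e2
  exact Option.some_inj.mp e2

lemma unit_mul_left {t k x : G} (h : 𝒢.mul (𝒢.src t) k = some x) :
    x = k ∧ 𝒢.rng k = 𝒢.src t := by
  constructor
  · have h1 := 𝒢.unit_idem t
    have h3 := 𝒢.massoc h1 h
    rw [h] at h3
    have e1 := 𝒢.inv_mul_cancel h
    have e2 := 𝒢.inv_mul_cancel h3.symm
    rw [e1] at e2
    exact (Option.some_inj.mp e2).symm
  · have hc := 𝒢.comp_src_eq_rng (g := 𝒢.src t) (k := k) (by rw [h]; rfl)
    have hsrc : 𝒢.src (𝒢.src t) = 𝒢.src t := by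
      have := 𝒢.inv_mul_cancel (𝒢.unit_idem t)
      rw [Gpd.src, this]; rfl
    rw [hsrc] at hc
    exact hc.symm

lemma unit_mul_right {t k x : G} (h : 𝒢.mul k (𝒢.src t) = some x) :
    x = k ∧ 𝒢.src k = 𝒢.src t := by
  constructor
  · have h1 := 𝒢.unit_idem t
    have h3 := 𝒢.massoc h h1
    rw [h] at h3
    have e1 := 𝒢.mul_inv_cancel h
    have e2 := 𝒢.mul_inv_cancel h3
    rw [e1] at e2
    exact (Option.some_inj.mp e2).symm
  · have hc := 𝒢.comp_src_eq_rng (g := k) (k := 𝒢.src t) (by rw [h]; rfl)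
    have hrng : 𝒢.rng (𝒢.src t) = 𝒢.src t := by
      have := 𝒢.mul_inv_cancel (𝒢.unit_idem t)
      rw [Gpd.rng, this]; rfl
    rw [hrng] at hc
    exact hc

lemma rng_mul_self (g : G) : 𝒢.mul (𝒢.rng g) g = some g :=
  𝒢.rng_mul (𝒢.rng_spec g)

lemma src_mul_self (g : G) : 𝒢.mul g (𝒢.src g) = some g :=
  𝒢.mul_src (𝒢.src_spec g)

lemma mul_inv_self (g : G) : 𝒢.mul g (𝒢.inv g) = some (𝒢.src (𝒢.inv g)) := by
  rw [𝒢.rng_spec, 𝒢.src_inv]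

lemma unit_mul_inv_right (g : G) : 𝒢.mul (𝒢.src g) (𝒢.inv g) = some (𝒢.inv g) := by
  have h : 𝒢.mul (𝒢.inv g) (𝒢.inv (𝒢.inv g)) = some (𝒢.src g) := by
    rw [𝒢.inv_inv]; exact 𝒢.src_spec g
  exact 𝒢.rng_mul h

section Conv

variable [Mul Y]

lemma convProd_unpack {A B : G → Option Y} {x : G} {v : Y}
    (h : 𝒢.convProd A B x = some v) :
    ∃ g k y z, A g = some y ∧ B k = some z ∧ 𝒢.mul g k = some x ∧ v = y * z := by
  by_cases hcond : ∃ p : Y × Y, ∃ g k : G,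
      A g = some p.1 ∧ B k = some p.2 ∧ 𝒢.mul g k = some x
  · rw [Gpd.convProd, dif_pos hcond] at h
    obtain ⟨g, k, h1, h2, h3⟩ := hcond.choose_spec
    exact ⟨g, k, _, _, h1, h2, h3, (Option.some_inj.mp h).symm⟩
  · rw [Gpd.convProd, dif_neg hcond] at h
    exact absurd h (by simp)

lemma convProd_eval {A B : G → Option Y}
    (hA : 𝒢.IsBisection (pdom A)) (_hB : 𝒢.IsBisection (pdom B))
    {g k x : G} {y z : Y}
    (hg : A g = some y) (hk : B k = some z) (hx : 𝒢.mul g k = some x) :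
    𝒢.convProd A B x = some (y * z) := by
  have hcond : ∃ p : Y × Y, ∃ g' k' : G,
      A g' = some p.1 ∧ B k' = some p.2 ∧ 𝒢.mul g' k' = some x :=
    ⟨(y, z), g, k, hg, hk, hx⟩
  rw [Gpd.convProd, dif_pos hcond]
  obtain ⟨g', k', h1, h2, h3⟩ := hcond.choose_spec
  have hg' : g' = g := by
    refine hA g' (mem_pdom h1) g (mem_pdom hg) (Or.inr ?_)
    rw [← 𝒢.rng_of_mul h3]
    exact 𝒢.rng_of_mul hx
  subst hg'
  have hk' : k' = k := 𝒢.mul_left_cancel' h3 hx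
  subst hk'
  rw [hg] at h1
  rw [hk] at h2
  rw [Option.some_inj.mp h1, Option.some_inj.mp h2]

lemma convProd_defined {A B : G → Option Y} {g k x : G}
    (hg : (A g).isSome) (hk : (B k).isSome) (hx : 𝒢.mul g k = some x) :
    (𝒢.convProd A B x).isSome := by
  obtain ⟨y, hy⟩ := Option.isSome_iff_exists.mp hg
  obtain ⟨z, hz⟩ := Option.isSome_iff_exists.mp hk
  have hcond : ∃ p : Y × Y, ∃ g' k' : G,
      A g' = some p.1 ∧ B k' = some p.2 ∧ 𝒢.mul g' k' = some x :=
    ⟨(y, z), g, k, hy, hz, hx⟩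
  rw [Gpd.convProd, dif_pos hcond]; rfl

end Conv

end Gpd

section Key

variable {G Y : Type*} [TopologicalSpace G] [Monoid Y]

/-- The key construction: if `w` takes values (at inverses) that are exactly
inverted by `a'`, and `c`'s domain consists of points whose inverses are in
`pdom w` with `w'` providing exact inverses of `w`'s values there, then
`s := (w * w') * a'` witnesses `c ≺ₛ a`. -/
lemma key_lemma (𝒢 : Gpd G) {S : Set (G → Option Y)} (hS : 𝒢.IsBumpy S)
    {a a' w w' c : G → Option Y}
    (ha : a ∈ S) (ha' : a' ∈ S) (hw : w ∈ S) (hw' : w' ∈ S) (hc : c ∈ S)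
    (hwTa : ∀ m, (w m).isSome →
      ∃ A α, a (𝒢.inv m) = some A ∧ a' m = some α ∧ A * α = 1 ∧ α * A = 1)
    (hcTw : ∀ h, (c h).isSome →
      ∃ W W', w (𝒢.inv h) = some W ∧ w' h = some W' ∧ W * W' = 1 ∧ W' * W = 1) :
    ∃ s ∈ S, precS 𝒢.convProd {x ∈ S | pdom x ⊆ 𝒢.unitSpace} c s a := by
  classical
  set e : G → Option Y := 𝒢.convProd w w' with he_def
  set s : G → Option Y := 𝒢.convProd e a' with hs_def
  have heS : e ∈ S := hS.mulClosed w hw w' hw'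
  have hsS : s ∈ S := hS.mulClosed e heS a' ha'
  have Ba := hS.domBisection a ha
  have Ba' := hS.domBisection a' ha'
  have Bw := hS.domBisection w hw
  have Bw' := hS.domBisection w' hw'
  have Bc := hS.domBisection c hc
  have Be := hS.domBisection e heS
  have Bs := hS.domBisection s hsS
  -- value of `s` at `inv h₁` for `h₁ ∈ pdom c`
  have s_at : ∀ h₁, (c h₁).isSome →
      ∃ A σ, a h₁ = some A ∧ s (𝒢.inv h₁) = some σ ∧ σ * A = 1 ∧ A * σ = 1 := by
    intro h₁ hh₁
    obtain ⟨W, W', hW, hW', hWW', hW'W⟩ := hcTw h₁ hh₁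
    obtain ⟨A, α, hA, hα, hAα, hαA⟩ := hwTa _ (by rw [hW]; rfl)
    rw [𝒢.inv_inv] at hA
    have h1e : e (𝒢.src h₁) = some (W * W') :=
      𝒢.convProd_eval Bw Bw' hW hW' (𝒢.src_spec h₁)
    have hs1 : s (𝒢.inv h₁) = some ((W * W') * α) :=
      𝒢.convProd_eval Be Ba' h1e hα (𝒢.unit_mul_inv_right h₁)
    refine ⟨A, (W * W') * α, hA, hs1, ?_, ?_⟩
    · rw [hWW', one_mul]; exact hαA
    · rw [hWW', one_mul]; exact hAα
  -- collapse of composable pairs `(h₁, x₁)` with `h₁ ∈ pdom c`, `x₁ ∈ pdom s`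
  have sCollapse : ∀ {h₁ x₁ : G} {σ : Y}, (c h₁).isSome → s x₁ = some σ →
      (𝒢.mul h₁ x₁).isSome → x₁ = 𝒢.inv h₁ := by
    intro h₁ x₁ σ hh₁ hsx₁ hcomp
    obtain ⟨W, W', hW, hW', _, _⟩ := hcTw h₁ hh₁
    obtain ⟨p, m, ve, vα, hep, hαm, hpm, _⟩ := 𝒢.convProd_unpack hsx₁
    obtain ⟨k₁, k₂, W₁, W₂, hk₁, hk₂, hk₁₂, _⟩ := 𝒢.convProd_unpack hep
    have hr1 : 𝒢.src h₁ = 𝒢.rng x₁ := 𝒢.comp_src_eq_rng hcomp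
    have hr2 : 𝒢.rng x₁ = 𝒢.rng p := 𝒢.rng_of_mul hpm
    have hr3 : 𝒢.rng p = 𝒢.rng k₁ := 𝒢.rng_of_mul hk₁₂
    have hk1inv : k₁ = 𝒢.inv h₁ := by
      refine Bw k₁ (mem_pdom hk₁) (𝒢.inv h₁) (mem_pdom hW) (Or.inr ?_)
      rw [𝒢.rng_inv, ← hr3, ← hr2, ← hr1]
    subst hk1inv
    have hk2h : k₂ = h₁ := by
      refine Bw' k₂ (mem_pdom hk₂) h₁ (mem_pdom hW') (Or.inr ?_)
      have := 𝒢.comp_src_eq_rng (g := 𝒢.inv h₁) (k := k₂) (by rw [hk₁₂]; rfl)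
      rw [𝒢.src_inv] at this
      exact this.symm
    have hp : p = 𝒢.src h₁ := by
      rw [hk2h, 𝒢.src_spec h₁] at hk₁₂
      exact (Option.some_inj.mp hk₁₂).symm
    rw [hp] at hpm
    obtain ⟨hx₁m, hrngm⟩ := 𝒢.unit_mul_left hpm
    obtain ⟨A, α, _, hα, _, _⟩ := hwTa _ (by rw [hW]; rfl)
    have hminv : m = 𝒢.inv h₁ := by
      refine Ba' m (mem_pdom hαm) (𝒢.inv h₁) (mem_pdom hα) (Or.inr ?_)
      rw [𝒢.rng_inv, hrngm]
    rw [hx₁m, hminv]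
  have sCollapse' : ∀ {h₁ x₁ : G} {σ : Y}, (c h₁).isSome → s x₁ = some σ →
      (𝒢.mul x₁ h₁).isSome → x₁ = 𝒢.inv h₁ := by
    intro h₁ x₁ σ hh₁ hsx₁ hcomp
    obtain ⟨W, W', hW, hW', _, _⟩ := hcTw h₁ hh₁
    obtain ⟨p, m, ve, vα, hep, hαm, hpm, _⟩ := 𝒢.convProd_unpack hsx₁
    obtain ⟨k₁, k₂, W₁, W₂, hk₁, hk₂, hk₁₂, _⟩ := 𝒢.convProd_unpack hep
    obtain ⟨A, α, _, hα, _, _⟩ := hwTa _ (by rw [hW]; rfl)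
    have hr1 : 𝒢.src x₁ = 𝒢.rng h₁ := 𝒢.comp_src_eq_rng hcomp
    have hr2 : 𝒢.src x₁ = 𝒢.src m := 𝒢.src_of_mul hpm
    have hminv : m = 𝒢.inv h₁ := by
      refine Ba' m (mem_pdom hαm) (𝒢.inv h₁) (mem_pdom hα) (Or.inl ?_)
      rw [𝒢.src_inv, ← hr1, hr2]
    subst hminv
    have hsp : 𝒢.src p = 𝒢.rng (𝒢.inv h₁) := 𝒢.comp_src_eq_rng (by rw [hpm]; rfl)
    have hsp2 : 𝒢.src p = 𝒢.src k₂ := 𝒢.src_of_mul hk₁₂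
    have hk2h : k₂ = h₁ := by
      refine Bw' k₂ (mem_pdom hk₂) h₁ (mem_pdom hW') (Or.inl ?_)
      rw [← hsp2, hsp, 𝒢.rng_inv]
    have hk1inv : k₁ = 𝒢.inv h₁ := by
      refine Bw k₁ (mem_pdom hk₁) (𝒢.inv h₁) (mem_pdom hW) (Or.inl ?_)
      have h5 := 𝒢.comp_src_eq_rng (g := k₁) (k := k₂) (by rw [hk₁₂]; rfl)
      rw [𝒢.src_inv, h5, hk2h]
    have hp : p = 𝒢.src h₁ := by
      rw [hk1inv, hk2h, 𝒢.src_spec h₁] at hk₁₂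
      exact (Option.some_inj.mp hk₁₂).symm
    rw [hp] at hpm
    exact (𝒢.unit_mul_left hpm).1
  refine ⟨s, hsS, ?_, ?_, ?_, ?_⟩
  -- (P1) (c * s) * a = c
  · funext x
    by_cases hx : (c x).isSome
    · obtain ⟨A, σ, hA, hσ, hσA, _⟩ := s_at x hx
      obtain ⟨C, hC⟩ := Option.isSome_iff_exists.mp hx
      have hcs : 𝒢.convProd c s (𝒢.rng x) = some (C * σ) :=
        𝒢.convProd_eval Bc Bs hC hσ (𝒢.rng_spec x)
      have hfin : 𝒢.convProd (𝒢.convProd c s) a x = some ((C * σ) * A) :=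
        𝒢.convProd_eval (hS.domBisection _ (hS.mulClosed c hc s hsS)) Ba
          hcs hA (𝒢.rng_mul_self x)
      rw [hfin, hC, mul_assoc, hσA, mul_one]
    · rw [Option.not_isSome_iff_eq_none.mp hx]
      rcases hv : 𝒢.convProd (𝒢.convProd c s) a x with _ | v
      · rfl
      exfalso
      obtain ⟨P, k, vP, vA, hcsP, hak, hPk, _⟩ := 𝒢.convProd_unpack hv
      obtain ⟨h₁, x₁, C₁, σ₁, hch₁, hsx₁, hh₁x₁, _⟩ := 𝒢.convProd_unpack hcsP
      have hx₁ : x₁ = 𝒢.inv h₁ := sCollapse (by rw [hch₁]; rfl) hsx₁ (by rw [hh₁x₁]; rfl)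
      subst hx₁
      have hP : P = 𝒢.src (𝒢.inv h₁) := by
        rw [𝒢.mul_inv_self] at hh₁x₁
        exact (Option.some_inj.mp hh₁x₁).symm
      subst hP
      obtain ⟨hxk, hrngk⟩ := 𝒢.unit_mul_left hPk
      obtain ⟨A, σ, hA, _, _, _⟩ := s_at h₁ (by rw [hch₁]; rfl)
      have hkh : k = h₁ := by
        refine Ba k (mem_pdom hak) h₁ (mem_pdom hA) (Or.inr ?_)
        rw [hrngk, 𝒢.src_inv]
      rw [hxk, hkh] at hx
      exact hx (by rw [hch₁]; rfl)
  -- (P2) (a * s) * c = c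
  · funext x
    by_cases hx : (c x).isSome
    · obtain ⟨A, σ, hA, hσ, _, hAσ⟩ := s_at x hx
      obtain ⟨C, hC⟩ := Option.isSome_iff_exists.mp hx
      have has : 𝒢.convProd a s (𝒢.rng x) = some (A * σ) :=
        𝒢.convProd_eval Ba Bs hA hσ (𝒢.rng_spec x)
      have hfin : 𝒢.convProd (𝒢.convProd a s) c x = some ((A * σ) * C) :=
        𝒢.convProd_eval (hS.domBisection _ (hS.mulClosed a ha s hsS)) Bc
          has hC (𝒢.rng_mul_self x)
      rw [hfin, hC, hAσ, one_mul]
    · rw [Option.not_isSome_iff_eq_none.mp hx]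
      rcases hv : 𝒢.convProd (𝒢.convProd a s) c x with _ | v
      · rfl
      exfalso
      obtain ⟨Q, m₁, vQ, C₁, hasQ, hcm₁, hQm₁, _⟩ := 𝒢.convProd_unpack hv
      obtain ⟨k, x₁, vA, σ₁, hak, hsx₁, hkx₁, _⟩ := 𝒢.convProd_unpack hasQ
      have hsrc : 𝒢.src x₁ = 𝒢.rng m₁ := by
        have h1 : 𝒢.src Q = 𝒢.rng m₁ := 𝒢.comp_src_eq_rng (by rw [hQm₁]; rfl)
        rw [← h1, 𝒢.src_of_mul hkx₁]
      have hx₁ : x₁ = 𝒢.inv m₁ :=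
        sCollapse' (by rw [hcm₁]; rfl) hsx₁ (𝒢.comp_of_src_eq_rng hsrc)
      subst hx₁
      obtain ⟨A, σ, hA, _, _, _⟩ := s_at m₁ (by rw [hcm₁]; rfl)
      have hkm : k = m₁ := by
        refine Ba k (mem_pdom hak) m₁ (mem_pdom hA) (Or.inl ?_)
        have := 𝒢.comp_src_eq_rng (g := k) (k := 𝒢.inv m₁) (by rw [hkx₁]; rfl)
        rw [this, 𝒢.rng_inv]
      have hQ : Q = 𝒢.src (𝒢.inv m₁) := by
        rw [hkm, 𝒢.mul_inv_self] at hkx₁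
        exact (Option.some_inj.mp hkx₁).symm
      rw [hQ] at hQm₁
      have := (𝒢.unit_mul_left hQm₁).1
      rw [this] at hx
      exact hx (by rw [hcm₁]; rfl)
  -- (P3) c * s ∈ D
  · refine ⟨hS.mulClosed c hc s hsS, ?_⟩
    intro x' hx'
    obtain ⟨v, hv⟩ := Option.isSome_iff_exists.mp hx'
    obtain ⟨h₁, x₁, C₁, σ₁, hch₁, hsx₁, hh₁x₁, _⟩ := 𝒢.convProd_unpack hv
    have hx₁ : x₁ = 𝒢.inv h₁ := sCollapse (by rw [hch₁]; rfl) hsx₁ (by rw [hh₁x₁]; rfl)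
    subst hx₁
    rw [𝒢.mul_inv_self] at hh₁x₁
    exact ⟨𝒢.inv h₁, (Option.some_inj.mp hh₁x₁)⟩
  -- (P4) s * c ∈ D
  · refine ⟨hS.mulClosed s hsS c hc, ?_⟩
    intro x' hx'
    obtain ⟨v, hv⟩ := Option.isSome_iff_exists.mp hx'
    obtain ⟨x₁, h₁, σ₁, C₁, hsx₁, hch₁, hx₁h₁, _⟩ := 𝒢.convProd_unpack hv
    have hx₁ : x₁ = 𝒢.inv h₁ := sCollapse' (by rw [hch₁]; rfl) hsx₁ (by rw [hx₁h₁]; rfl)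
    subst hx₁
    rw [𝒢.src_spec] at hx₁h₁
    exact ⟨h₁, Option.some_inj.mp hx₁h₁⟩

end Key

/-- for a bumpy semigroup `S` and `g ∈ G`, the set
`S_g = {a ∈ S : g ∈ int([Y^×]a)}` is a filter for `≺`: an up-set and
down-directed. -/
theorem stmt15 {G Y : Type*} [TopologicalSpace G] [Monoid Y] (𝒢 : Gpd G)
    (hT2 : T2Space 𝒢.unitSpace) (hY : OneCancellative Y)
    (S : Set (G → Option Y)) (hS : 𝒢.IsBumpy S)
    (D : Set (G → Option Y)) (hDdef : D = {a ∈ S | pdom a ⊆ 𝒢.unitSpace})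
    (g : G) :
    (∀ f ∈ S, ∀ a ∈ S, g ∈ interior (unitsPre f) →
      (∃ s ∈ S, precS 𝒢.convProd D f s a) → g ∈ interior (unitsPre a)) ∧
    (∀ a ∈ S, ∀ b ∈ S, g ∈ interior (unitsPre a) → g ∈ interior (unitsPre b) →
      ∃ c ∈ S, g ∈ interior (unitsPre c) ∧
        (∃ s ∈ S, precS 𝒢.convProd D c s a) ∧
        (∃ s ∈ S, precS 𝒢.convProd D c s b)) := by
  constructor
  -- up-set
  · rintro f hf a ha hg ⟨s₀, hs₀S, heq1, _heq2, hmem3, _⟩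
    refine interior_mono ?_ hg
    rintro h ⟨y, hy, hyU⟩
    rw [← heq1] at hy
    obtain ⟨g₁, k, v₁, v₂, hfs, hak, hmul, hv⟩ := 𝒢.convProd_unpack hy
    rw [hDdef] at hmem3
    obtain ⟨t, ht⟩ := hmem3.2 (mem_pdom hfs)
    rw [← ht] at hmul
    obtain ⟨hhk, -⟩ := 𝒢.unit_mul_left hmul
    subst hhk
    refine ⟨v₂, hak, ?_⟩
    obtain ⟨u, hu⟩ := hyU
    have hL : ((u⁻¹ : Yˣ) * v₁) * v₂ = 1 := by
      rw [mul_assoc, ← hv, ← hu, Units.inv_mul]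
    have hR : v₂ * ((u⁻¹ : Yˣ) * v₁) = 1 := by
      refine (hY v₂ (v₂ * ((u⁻¹ : Yˣ) * v₁))).2.mp ?_
      rw [mul_assoc, hL, mul_one]
    exact ⟨⟨v₂, (u⁻¹ : Yˣ) * v₁, hR, hL⟩, rfl⟩
  -- down-directed
  · intro a ha b hb hga hgb
    obtain ⟨a', ha'S, ha'int⟩ := hS.involutive a ha g hga
    obtain ⟨b', hb'S, hb'int⟩ := hS.involutive b hb g hgb
    obtain ⟨w, hwS, hwdom, hwint⟩ := hS.urysohn
      (interior {h | ∃ y z, a (𝒢.inv h) = some y ∧ a' h = some z ∧ y * z = 1 ∧ z * y = 1} ∩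
        interior {h | ∃ y z, b (𝒢.inv h) = some y ∧ b' h = some z ∧ y * z = 1 ∧ z * y = 1})
      (isOpen_interior.inter isOpen_interior) (𝒢.inv g) ⟨ha'int, hb'int⟩
    obtain ⟨w', hw'S, hw'int⟩ := hS.involutive w hwS (𝒢.inv g) hwint
    rw [𝒢.inv_inv] at hw'int
    obtain ⟨c, hcS, hcdom, hcint⟩ := hS.urysohn
      (interior {h | ∃ y z, w (𝒢.inv h) = some y ∧ w' h = some z ∧ y * z = 1 ∧ z * y = 1})
      isOpen_interior g hw'int
    have hcTw : ∀ h, (c h).isSome →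
        ∃ W W', w (𝒢.inv h) = some W ∧ w' h = some W' ∧ W * W' = 1 ∧ W' * W = 1 := by
      intro h hh
      have h2 : h ∈ {h | ∃ y z, w (𝒢.inv h) = some y ∧ w' h = some z ∧
          y * z = 1 ∧ z * y = 1} := interior_subset (hcdom hh)
      exact h2
    refine ⟨c, hcS, hcint, ?_, ?_⟩
    · rw [hDdef]
      refine key_lemma 𝒢 hS ha ha'S hwS hw'S hcS ?_ hcTw
      intro m hm
      have h2 : m ∈ {h | ∃ y z, a (𝒢.inv h) = some y ∧ a' h = some z ∧
          y * z = 1 ∧ z * y = 1} := interior_subset (hwdom hm).1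
      exact h2
    · rw [hDdef]
      refine key_lemma 𝒢 hS hb hb'S hwS hw'S hcS ?_ hcTw
      intro m hm
      have h2 : m ∈ {h | ∃ y z, b (𝒢.inv h) = some y ∧ b' h = some z ∧
          y * z = 1 ∧ z * y = 1} := interior_subset (hwdom hm).2
      exact h2
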